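/- With the parameter choices c_min = 0, c_max = 2 and λ = 1 (so c(h) = 2/(1 + exp(h - τ))), the margin-adaptive weight w is differentiable at every point of ℝ \ {0, -τ}, and its derivative is uniformly bounded there: there exists L_w > 0 such that |w'(h)| ≤ L_w for every h ∈ ℝ with h ≠ 0 and h ≠ -τ. -/

import Mathlib

/-- The logistic sigmoid function. -/
noncomputable def sigma (x : ℝ) : ℝ := 1 / (1 + Real.exp (-x))

/-- The coefficient function with `c_min = 0`, `c_max = 2`, `λ = 1`. -/
noncomputable def coef2 (τ h : ℝ) : ℝ := 2 / (1 + Real.exp (h - τ))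

/-- The margin-adaptive weight with `c_min = 0`, `c_max = 2`, `λ = 1`. -/
noncomputable def madw2 (τ h : ℝ) : ℝ :=
  if h > -τ then sigma (coef2 τ |h| * h) / sigma h else 1

/-!
Below `-τ` the weight is constant. Above `-τ` it is `σ (g h) / σ h` with `g h = c |h| * h`; by the
quotient rule and `σ' = σ (1 - σ) ∈ [0, 1/4]` its derivative is at most `(|g'| / 4 + 1) / σ h`, and
`1 / σ h = 1 + exp (-h) ≤ 1 + exp τ` there. Finally `g' = c |h| + c' |h| * |h|` stays below
`2 + 2 exp τ`: writing `E = exp (|h| - τ)`, one has `|h| ≤ exp |h| = exp τ * E`, so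
`|c' |h|| * |h| = 2 |h| E / (1 + E)² ≤ 2 exp τ`.
-/

open Real Filter Topology

lemma inv_sigma (x : ℝ) : (sigma x)⁻¹ = 1 + exp (-x) := by
  rw [sigma, one_div, inv_inv]

lemma sigma_pos (x : ℝ) : 0 < sigma x := by
  unfold sigma; positivity

lemma sigma_le_one (x : ℝ) : sigma x ≤ 1 := by
  rw [sigma, div_le_one (by positivity)]
  linarith [exp_pos (-x)]

lemma sigma_mul_one_sub_le (x : ℝ) : sigma x * (1 - sigma x) ≤ 1 / 4 := by
  nlinarith [sq_nonneg (sigma x - 1 / 2)]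

lemma hasDerivAt_sigma (x : ℝ) : HasDerivAt sigma (sigma x * (1 - sigma x)) x := by
  have hden : HasDerivAt (fun y => 1 + exp (-y)) (-exp (-x)) x := by
    simpa using ((hasDerivAt_neg x).exp).const_add 1
  refine ((hasDerivAt_const x (1 : ℝ)).div hden (by positivity)).congr_deriv ?_
  rw [sigma]
  field_simp
  ring

lemma hasDerivAt_sigma_comp_div_sigma {G : ℝ → ℝ} {g' x : ℝ} (hG : HasDerivAt G g' x) :
    ∃ D, HasDerivAt (fun y => sigma (G y) / sigma y) D x ∧
      |D| ≤ (|g'| / 4 + 1) * (1 + exp (-x)) := by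
  set a := sigma (G x)
  set s := sigma x
  have hF : HasDerivAt (fun y => sigma (G y) / sigma y)
      ((a * (1 - a) * g' * s - a * (s * (1 - s))) / s ^ 2) x :=
    ((hasDerivAt_sigma (G x)).comp x hG).div (hasDerivAt_sigma x) (sigma_pos x).ne'
  refine ⟨_, hF, ?_⟩
  have ha : 0 < a := sigma_pos _
  have ha' : a ≤ 1 := sigma_le_one _
  have hs : 0 < s := sigma_pos _
  have hs' : s ≤ 1 := sigma_le_one _
  have hD : (a * (1 - a) * g' * s - a * (s * (1 - s))) / s ^ 2
      = (a * (1 - a) * g' - a * (1 - s)) * (1 + exp (-x)) := by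
    rw [← inv_sigma]; change _ = _ * s⁻¹; field_simp
  have hnum : |a * (1 - a) * g' - a * (1 - s)| ≤ |g'| / 4 + 1 := by
    have h₁ : |a * (1 - a) * g'| ≤ |g'| / 4 := by
      rw [abs_mul, abs_of_nonneg (by nlinarith)]
      nlinarith [sigma_mul_one_sub_le (G x), abs_nonneg g']
    have h₂ : |a * (1 - s)| ≤ 1 := by
      rw [abs_of_nonneg (by nlinarith)]; nlinarith
    calc _ ≤ |a * (1 - a) * g'| + |a * (1 - s)| := abs_sub _ _
      _ ≤ |g'| / 4 + 1 := by linarith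
  rw [hD, abs_mul, abs_of_pos (by positivity : (0 : ℝ) < 1 + exp (-x))]
  gcongr

lemma hasDerivAt_coef2 (τ u : ℝ) :
    HasDerivAt (coef2 τ) (-(2 * exp (u - τ)) / (1 + exp (u - τ)) ^ 2) u := by
  have hden : HasDerivAt (fun v => 1 + exp (v - τ)) (exp (u - τ)) u := by
    simpa using ((hasDerivAt_id u).sub_const τ).exp.const_add 1
  exact ((hasDerivAt_const u (2 : ℝ)).div hden (by positivity)).congr_deriv (by ring)

lemma mul_exp_sub_div_sq_le {τ u : ℝ} (hu : 0 ≤ u) :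
    u * exp (u - τ) / (1 + exp (u - τ)) ^ 2 ≤ exp τ := by
  set E := exp (u - τ)
  have hE : 0 < E := exp_pos _
  have hu_le : u ≤ exp τ * E := by
    rw [← exp_add, add_sub_cancel]; linarith [add_one_le_exp u]
  rw [div_le_iff₀ (by positivity)]
  nlinarith [exp_pos τ]

lemma hasDerivAt_coef2_abs_mul {τ y : ℝ} (hy : y ≠ 0) :
    ∃ g', HasDerivAt (fun v => coef2 τ |v| * v) g' y ∧ |g'| ≤ 2 + 2 * exp τ := by
  set E := exp (|y| - τ)
  have hE : 0 < E := exp_pos _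
  have hg := ((hasDerivAt_coef2 τ |y|).comp y (hasDerivAt_abs hy)).mul (hasDerivAt_id y)
  refine ⟨_, hg, ?_⟩
  have hslope : |-(2 * E) / (1 + E) ^ 2 * SignType.sign y * y| ≤ 2 * exp τ := by
    rw [mul_assoc, sign_mul_self, abs_mul, abs_div, abs_neg, abs_abs,
      abs_of_pos (by positivity : 0 < 2 * E), abs_of_pos (by positivity : (0 : ℝ) < (1 + E) ^ 2)]
    have := mul_exp_sub_div_sq_le (τ := τ) (abs_nonneg y)
    calc 2 * E / (1 + E) ^ 2 * |y| = 2 * (|y| * E / (1 + E) ^ 2) := by ring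
      _ ≤ 2 * exp τ := by gcongr
  have hvalue : |coef2 τ (|y|)| ≤ 2 := by
    rw [coef2, abs_of_pos (by positivity), div_le_iff₀ (by positivity)]
    linarith
  simp only [Function.comp_apply, id_eq, mul_one]
  calc _ ≤ _ := abs_add_le _ _
    _ ≤ 2 + 2 * exp τ := by linarith

lemma madw2_eventuallyEq_one {τ h : ℝ} (hh : h < -τ) : madw2 τ =ᶠ[𝓝 h] fun _ => 1 := by
  filter_upwards [Iio_mem_nhds hh] with y hy
  exact if_neg (lt_asymm hy)

lemma madw2_eventuallyEq_div {τ h : ℝ} (hh : -τ < h) :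
    madw2 τ =ᶠ[𝓝 h] fun y => sigma (coef2 τ |y| * y) / sigma y := by
  filter_upwards [Ioi_mem_nhds hh] with y hy
  exact if_pos hy

lemma exists_hasDerivAt_madw2_abs_le {τ h : ℝ} (h0 : h ≠ 0) (hτ : h ≠ -τ) :
    ∃ D, HasDerivAt (madw2 τ) D h ∧ |D| ≤ ((2 + 2 * exp τ) / 4 + 1) * (1 + exp τ) := by
  rcases hτ.lt_or_gt with hlt | hgt
  · exact ⟨0, (hasDerivAt_const h 1).congr_of_eventuallyEq (madw2_eventuallyEq_one hlt),
      by simp only [abs_zero]; positivity⟩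
  · obtain ⟨g', hg, hg'⟩ := hasDerivAt_coef2_abs_mul (τ := τ) h0
    obtain ⟨D, hD, hD'⟩ := hasDerivAt_sigma_comp_div_sigma hg
    refine ⟨D, hD.congr_of_eventuallyEq (madw2_eventuallyEq_div hgt), hD'.trans ?_⟩
    gcongr
    linarith

theorem madw2_differentiable_bounded_deriv_general (τ : ℝ) :
    (∀ h : ℝ, h ≠ 0 → h ≠ -τ → DifferentiableAt ℝ (madw2 τ) h) ∧
    ∃ L : ℝ, 0 < L ∧ ∀ h : ℝ, h ≠ 0 → h ≠ -τ → |deriv (madw2 τ) h| ≤ L := by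
  refine ⟨fun h h0 hτ => ?_, ((2 + 2 * exp τ) / 4 + 1) * (1 + exp τ), by positivity,
    fun h h0 hτ => ?_⟩ <;> obtain ⟨D, hD, hD'⟩ := exists_hasDerivAt_madw2_abs_le h0 hτ
  · exact hD.differentiableAt
  · rwa [hD.deriv]

/-- With `c_min = 0`, `c_max = 2`, `λ = 1`, the margin-adaptive weight `w` is
differentiable at every point of `ℝ \ {0, -τ}`, and its derivative is uniformly
bounded there. -/
theorem madw2_differentiable_bounded_deriv (τ : ℝ) (hτ : 0 < τ) :
    (∀ h : ℝ, h ≠ 0 → h ≠ -τ → DifferentiableAt ℝ (madw2 τ) h) ∧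
    ∃ L : ℝ, 0 < L ∧ ∀ h : ℝ, h ≠ 0 → h ≠ -τ → |deriv (madw2 τ) h| ≤ L :=
  madw2_differentiable_bounded_deriv_general τ
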